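/- Consider an absorbing MDP and two stationary policies π and σ. If σ(·|x) is absolutely continuous with respect to π(·|x) for every x ∈ X, then q_n^σ is absolutely continuous with respect to q_n^π for every n = 0,1,…, and consequently the occupancy marginal q^σ is absolutely continuous with respect to q^π. -/

import Mathlib

open MeasureTheory ProbabilityTheory Filter Topology
open scoped ENNReal NNReal

namespace PaperMDP

variable {S A : Type*} [MeasurableSpace S] [MeasurableSpace A]

/-- Histories up to time `t`: states `x_0,…,x_t` and actions `a_0,…,a_{t-1}`. -/
abbrev Hist (S A : Type*) (t : ℕ) : Type _ := (Fin (t + 1) → S) × (Fin t → A)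

/-- A Markov decision process model: action sets `act x` with measurable graph admitting a
measurable selector, and a transition probability kernel `p`.  The initial distribution is
supplied separately. -/
structure MDP (S A : Type*) [MeasurableSpace S] [MeasurableSpace A] where
  act : S → Set A
  act_nonempty : ∀ x, (act x).Nonempty
  graph_meas : MeasurableSet {q : S × A | q.2 ∈ act q.1}
  sel0 : S → A
  sel0_meas : Measurable sel0
  sel0_mem : ∀ x, sel0 x ∈ act x
  p : Kernel (S × A) S
  p_markov : IsMarkovKernel p

variable (M : MDP S A)

/-- A general (randomized, history-dependent) policy. -/
structure Policy where
  ker : (t : ℕ) → Kernel (Hist S A t) A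
  prob : ∀ t, IsMarkovKernel (ker t)
  feasible : ∀ t (h : Hist S A t), ker t h {a | a ∈ M.act (h.1 (Fin.last t))} = 1

/-- A measurable selector, identified with a deterministic policy. -/
structure Selector where
  toFun : S → A
  meas : Measurable toFun
  mem : ∀ x, toFun x ∈ M.act x

/-- A stationary (randomized) policy. -/
structure StatPolicy where
  ker : Kernel S A
  prob : IsMarkovKernel ker
  feasible : ∀ x, ker x {a | a ∈ M.act x} = 1

/-- A nonrandomized Markov policy: a sequence of measurable selectors. -/
structure MarkovNR where
  sel : ℕ → S → A
  meas : ∀ t, Measurable (sel t)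
  mem : ∀ t x, sel t x ∈ M.act x

variable {M}

/-- The policy determined by a selector (a deterministic policy). -/
noncomputable def Selector.policy (φ : Selector M) : Policy M where
  ker t := Kernel.deterministic (fun h : Hist S A t => φ.toFun (h.1 (Fin.last t)))
    (φ.meas.comp ((measurable_pi_apply (Fin.last t)).comp measurable_fst))
  prob t := by infer_instance
  feasible t h := by
    rw [Kernel.deterministic_apply]
    exact Measure.dirac_apply_of_mem (φ.mem _)

/-- The policy determined by a stationary policy. -/
noncomputable def StatPolicy.policy (s : StatPolicy M) : Policy M where
  ker t := s.ker.comap (fun h : Hist S A t => h.1 (Fin.last t))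
    ((measurable_pi_apply (Fin.last t)).comp measurable_fst)
  prob t := by have := s.prob; infer_instance
  feasible t h := by rw [Kernel.comap_apply]; exact s.feasible _

/-- The policy determined by a nonrandomized Markov policy. -/
noncomputable def MarkovNR.policy (φ : MarkovNR M) : Policy M where
  ker t := Kernel.deterministic (fun h : Hist S A t => φ.sel t (h.1 (Fin.last t)))
    ((φ.meas t).comp ((measurable_pi_apply (Fin.last t)).comp measurable_fst))
  prob t := by infer_instance
  feasible t h := by
    rw [Kernel.deterministic_apply]
    exact Measure.dirac_apply_of_mem (φ.mem _ _)

/-- Finite-horizon strategic (history) measures, built by the Ionescu–Tulcea recursion from the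
initial distribution `μ`, the policy `π` and the transition kernel `M.p`. -/
noncomputable def histMeas (μ : Measure S) (π : Policy M) : (t : ℕ) → Measure (Hist S A t)
  | 0 => μ.map (fun x => (fun _ => x, fun i => i.elim0))
  | (t + 1) => (histMeas μ π t).bind (fun h =>
      (π.ker t h).bind (fun a =>
        (M.p (h.1 (Fin.last t), a)).map (fun y => (Fin.snoc h.1 y, Fin.snoc h.2 a))))

/-- The joint distribution of the state-action pair `(x_t, a_t)` under policy `π`. -/
noncomputable def saMeas (μ : Measure S) (π : Policy M) (t : ℕ) : Measure (S × A) :=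
  (histMeas μ π t).bind (fun h => (π.ker t h).map (fun a => (h.1 (Fin.last t), a)))

/-- The distribution of the state `x_t` under policy `π`. -/
noncomputable def stateMeas (μ : Measure S) (π : Policy M) (t : ℕ) : Measure S :=
  (histMeas μ π t).map (fun h => h.1 (Fin.last t))

/-- `survive μ π star t = P^π(T^{star} > t)`, the probability that the process has not yet
reached the absorbing state `star` by time `t`. -/
noncomputable def survive (μ : Measure S) (π : Policy M) (star : S) (t : ℕ) : ℝ≥0∞ :=
  histMeas μ π t {h | ∀ s, h.1 s ≠ star}

/-- The expected total reward vector `v^π` (well defined whenever the series converges;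
for absorbing MDPs with bounded rewards vanishing at the absorbing state this coincides with
`E^π Σ_{t<T} r(x_t,a_t)`). -/
noncomputable def perf (μ : Measure S) {N : ℕ} (r : S × A → Fin N → ℝ) (π : Policy M) :
    Fin N → ℝ :=
  fun n => ∑' t : ℕ, ∫ z, r z n ∂(saMeas μ π t)

/-- The expected total reward for a single criterion. -/
noncomputable def perfR (μ : Measure S) (r : S × A → ℝ) (π : Policy M) : ℝ :=
  ∑' t : ℕ, ∫ z, r z ∂(saMeas μ π t)

/-- The expected total discounted reward vector `v_β^π`. -/
noncomputable def dperf (μ : Measure S) {N : ℕ} (r : S × A → Fin N → ℝ) (β : ℝ)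
    (π : Policy M) : Fin N → ℝ :=
  fun n => ∑' t : ℕ, β ^ t * ∫ z, r z n ∂(saMeas μ π t)

variable (M)

/-- The set of performance vectors of all policies. -/
def perfSet (μ : Measure S) {N : ℕ} (r : S × A → Fin N → ℝ) : Set (Fin N → ℝ) :=
  {v | ∃ π : Policy M, perf μ r π = v}

/-- The set of performance vectors of deterministic policies. -/
def perfSetDet (μ : Measure S) {N : ℕ} (r : S × A → Fin N → ℝ) : Set (Fin N → ℝ) :=
  {v | ∃ φ : Selector M, perf μ r φ.policy = v}

/-- The set of performance vectors of stationary policies. -/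
def perfSetStat (μ : Measure S) {N : ℕ} (r : S × A → Fin N → ℝ) : Set (Fin N → ℝ) :=
  {v | ∃ s : StatPolicy M, perf μ r s.policy = v}

/-- The set of scalar performance values of all policies (single criterion). -/
def perfRSet (μ : Measure S) (r : S × A → ℝ) : Set ℝ :=
  {v | ∃ π : Policy M, perfR μ r π = v}

/-- The set of scalar performance values of deterministic policies (single criterion). -/
def perfRSetDet (μ : Measure S) (r : S × A → ℝ) : Set ℝ :=
  {v | ∃ φ : Selector M, perfR μ r φ.policy = v}

/-- The set of discounted performance vectors of all policies. -/
def dperfSet (μ : Measure S) {N : ℕ} (r : S × A → Fin N → ℝ) (β : ℝ) : Set (Fin N → ℝ) :=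
  {v | ∃ π : Policy M, dperf μ r β π = v}

/-- The set of discounted performance vectors of deterministic policies. -/
def dperfSetDet (μ : Measure S) {N : ℕ} (r : S × A → Fin N → ℝ) (β : ℝ) : Set (Fin N → ℝ) :=
  {v | ∃ φ : Selector M, dperf μ r β φ.policy = v}

/-- An MDP (with initial distribution `μ`, reward `r`, state space `X̄ = X ∪ {star}`) is
absorbing. -/
structure Absorbing (μ : Measure S) {N : ℕ} (r : S × A → Fin N → ℝ) (star : S) (abar : A) :
    Prop where
  mu_prob : IsProbabilityMeasure μ
  mu_star : μ {star} = 0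
  act_star : M.act star = {abar}
  p_star : M.p (star, abar) {star} = 1
  r_star : ∀ n, r (star, abar) n = 0
  hit_bdd : ∃ L : ℝ, ∀ π : Policy M, (∑' t : ℕ, survive μ π star t) ≤ ENNReal.ofReal L

/-- A uniformly absorbing MDP:  `sup_{π ∈ 𝕄} E^π Σ_{t ≥ n} 1{t < T} → 0` as `n → ∞`. -/
structure UnifAbsorbing (μ : Measure S) {N : ℕ} (r : S × A → Fin N → ℝ) (star : S) (abar : A)
    extends Absorbing M μ r star abar : Prop where
  unif : Tendsto (fun n : ℕ => ⨆ φ : MarkovNR M, ∑' t : ℕ, survive μ φ.policy star (n + t))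
    atTop (𝓝 (0 : ℝ≥0∞))

/-- An absorbing MDP is atomless: the initial distribution and the transition probabilities are
atomless on `X = X̄ \ {star}`. -/
def AtomlessAbs (μ : Measure S) (star : S) : Prop :=
  (∀ x, x ≠ star → μ {x} = 0) ∧
    ∀ x y a, x ≠ star → y ≠ star → a ∈ M.act x → M.p (x, a) {y} = 0

/-- A (discounted) MDP is atomless. -/
def AtomlessD (μ : Measure S) : Prop :=
  (∀ x, μ {x} = 0) ∧ ∀ x y a, a ∈ M.act x → M.p (x, a) {y} = 0

variable {M}

/-- The occupancy measure `Q^π` on `X × A` (where `X = X̄ \ {star}`). -/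
noncomputable def occMeas (μ : Measure S) (π : Policy M) (star : S) : Measure (S × A) :=
  (Measure.sum fun t : ℕ => saMeas μ π t).restrict {z : S × A | z.1 ≠ star}

/-- `q_n^π`, the distribution of `x_n` restricted to `X = X̄ \ {star}`. -/
noncomputable def qn (μ : Measure S) (π : Policy M) (star : S) (n : ℕ) : Measure S :=
  (stateMeas μ π n).restrict {x | x ≠ star}

/-- The occupancy marginal `q^π = Σ_n q_n^π` on `X`. -/
noncomputable def qMeas (μ : Measure S) (π : Policy M) (star : S) : Measure S :=
  Measure.sum fun n : ℕ => qn μ π star n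

/-- Distance in total variation between two (finite) measures. -/
noncomputable def dTV {Z : Type*} [MeasurableSpace Z] (μ ν : Measure Z) : ℝ≥0∞ :=
  ⨆ (s : Set Z) (_ : MeasurableSet s), max (μ s - ν s) (ν s - μ s)

/-- `M'` is a submodel of `M`: same state and action spaces and transition probabilities, and
smaller action sets. -/
def IsSubmodel (M' M : MDP S A) : Prop :=
  M'.p = M.p ∧ ∀ x, M'.act x ⊆ M.act x

/-- The stationary policy `π*` averaging two deterministic policies:
`π*(B|x) = ½(1{φ⁰(x) ∈ B} + 1{φ¹(x) ∈ B})`. -/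
noncomputable def mixStat (f0 f1 : Selector M) : StatPolicy M where
  ker :=
    { toFun := fun x => (2 : ℝ≥0∞)⁻¹ • (Measure.dirac (f0.toFun x) + Measure.dirac (f1.toFun x))
      measurable' := by
        apply Measure.measurable_of_measurable_coe
        intro s hs
        simp_rw [Measure.smul_apply, Measure.add_apply, smul_eq_mul,
          Measure.dirac_apply' _ hs]
        exact (((measurable_one.indicator hs).comp f0.meas).add
          ((measurable_one.indicator hs).comp f1.meas)).const_mul _ }
  prob := by
    constructor
    intro x
    constructor
    show ((2 : ℝ≥0∞)⁻¹ • (Measure.dirac (f0.toFun x) + Measure.dirac (f1.toFun x))) Set.univ = 1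
    rw [Measure.smul_apply, Measure.add_apply, measure_univ, measure_univ, smul_eq_mul]
    rw [one_add_one_eq_two, ENNReal.inv_mul_cancel two_ne_zero (by simp)]
  feasible x := by
    show ((2 : ℝ≥0∞)⁻¹ • (Measure.dirac (f0.toFun x) + Measure.dirac (f1.toFun x)))
      {a | a ∈ M.act x} = 1
    rw [Measure.smul_apply, Measure.add_apply,
      Measure.dirac_apply_of_mem (show f0.toFun x ∈ {a | a ∈ M.act x} from f0.mem x),
      Measure.dirac_apply_of_mem (show f1.toFun x ∈ {a | a ∈ M.act x} from f1.mem x),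
      smul_eq_mul, one_add_one_eq_two,
      ENNReal.inv_mul_cancel two_ne_zero (by simp)]

/-- A point `v` of the performance set allows the dimensionality reduction. -/
def AllowsDimRed (M : MDP S A) (μ : Measure S) {N : ℕ} (r : S × A → Fin N → ℝ)
    (v : Fin N → ℝ) : Prop :=
  ∃ (i : Fin N) (b : Fin N → ℝ) (d : ℝ) (M' : MDP S A), IsSubmodel M' M ∧
    v ∈ perfSet M' μ r ∧
    ∀ w ∈ perfSet M' μ r, w i = d + ∑ j ∈ Finset.univ.erase i, b j * w j

end PaperMDP

section

variable {α β γ : Type*} [MeasurableSpace α] [MeasurableSpace β] [MeasurableSpace γ]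

theorem Measurable.finSnoc {n : ℕ} {f : α → Fin n → β} {g : α → β} (hf : Measurable f)
    (hg : Measurable g) : Measurable fun a => (Fin.snoc (f a) (g a) : Fin (n + 1) → β) :=
  measurable_pi_iff.2 fun i =>
    Fin.lastCases (by simpa using hg) (fun j => by simpa using measurable_pi_iff.1 hf j) i

namespace MeasureTheory.Measure

theorem AbsolutelyContinuous.bind {μ ν : Measure α} {f g : α → Measure β} (hf : Measurable f)
    (hg : Measurable g) (hμν : μ ≪ ν) (hfg : ∀ᵐ a ∂μ, f a ≪ g a) : μ.bind f ≪ ν.bind g :=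
  AbsolutelyContinuous.comp (κ := ⟨f, hf⟩) (η := ⟨g, hg⟩) hμν hfg

theorem measurable_map_of_measurable_uncurry (κ : Kernel α β) [IsSFiniteKernel κ]
    {g : α → β → γ} (hg : Measurable (Function.uncurry g)) :
    Measurable fun a => (κ a).map (g a) := by
  refine measurable_of_measurable_coe _ fun s hs => ?_
  simp_rw [map_apply hg.of_uncurry_left hs]
  exact Kernel.measurable_kernel_prodMk_left (hg hs)

theorem measurable_bind_of_measurable_uncurry (κ : Kernel α β) [IsSFiniteKernel κ]
    {f : α → β → Measure γ} (hf : Measurable (Function.uncurry f)) :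
    Measurable fun a => (κ a).bind (f a) := by
  refine measurable_of_measurable_coe _ fun s hs => ?_
  simp_rw [bind_apply hs hf.of_uncurry_left.aemeasurable]
  exact Measurable.lintegral_kernel_prod_right (f := fun a b => f a b s)
    ((measurable_coe hs).comp hf)

end MeasureTheory.Measure

end

/-! The law of the history at time `t + 1` is obtained from the law at time `t` by two binds, one
with the action kernel of the policy and one with the transition kernel, and binding preserves
absolute continuity in both arguments. So, by induction on `t`, the history laws under `σ` are
absolutely continuous w.r.t. those under `π`, and so are their images `x_t`, their restrictions
to `X` and the sums of these. -/

namespace PaperMDP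

variable {S A : Type*} [MeasurableSpace S] [MeasurableSpace A] {M : MDP S A}

def Hist.snoc {t : ℕ} (h : Hist S A t) (a : A) (y : S) : Hist S A (t + 1) :=
  (Fin.snoc h.1 y, Fin.snoc h.2 a)

theorem Hist.measurable_snoc {t : ℕ} :
    Measurable fun q : (Hist S A t × A) × S => q.1.1.snoc q.1.2 q.2 :=
  (measurable_fst.fst.fst.finSnoc measurable_snd).prodMk
    (measurable_fst.fst.snd.finSnoc measurable_fst.snd)

variable (M) in
noncomputable def histStep {t : ℕ} (h : Hist S A t) (a : A) : Measure (Hist S A (t + 1)) :=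
  (M.p (h.1 (Fin.last t), a)).map (h.snoc a)

theorem measurable_histStep {t : ℕ} : Measurable fun q : Hist S A t × A => histStep M q.1 q.2 :=
  have := M.p_markov
  Measure.measurable_map_of_measurable_uncurry
    (M.p.comap (fun q : Hist S A t × A => (q.1.1 (Fin.last t), q.2)) (by fun_prop))
    Hist.measurable_snoc

theorem histMeas_succ (μ : Measure S) (π : Policy M) (t : ℕ) :
    histMeas μ π (t + 1) = (histMeas μ π t).bind fun h => (π.ker t h).bind (histStep M h) :=
  rfl

theorem histMeas_absolutelyContinuous {μ : Measure S} {π σ : Policy M}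
    (hac : ∀ t h, σ.ker t h ≪ π.ker t h) (t : ℕ) : histMeas μ σ t ≪ histMeas μ π t := by
  have hbind (ρ : Policy M) (t : ℕ) : Measurable fun h => (ρ.ker t h).bind (histStep M h) :=
    have := ρ.prob t
    Measure.measurable_bind_of_measurable_uncurry _ measurable_histStep
  induction t with
  | zero => rfl
  | succ t ih =>
    rw [histMeas_succ, histMeas_succ]
    refine ih.bind (hbind σ t) (hbind π t) (ae_of_all _ fun h => ?_)
    have hh : Measurable (histStep M h) := measurable_histStep.comp measurable_prodMk_left
    exact (hac t h).bind hh hh (ae_of_all _ fun _ => .rfl)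

end PaperMDP

open PaperMDP in
theorem qn_absolutelyContinuous_general
    {S A : Type*} [MeasurableSpace S]
    [MeasurableSpace A]
    (M : MDP S A) (μ : MeasureTheory.Measure S) (star : S)
    (π σ : StatPolicy M)
    (hac : ∀ x : S, σ.ker x ≪ π.ker x) :
    (∀ n : ℕ, qn μ σ.policy star n ≪ qn μ π.policy star n) ∧
      qMeas μ σ.policy star ≪ qMeas μ π.policy star := by
  have hq (n : ℕ) : qn μ σ.policy star n ≪ qn μ π.policy star n :=
    ((histMeas_absolutelyContinuous (fun t h => hac _) n).map (by fun_prop)).restrict _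
  exact ⟨hq, Measure.absolutelyContinuous_sum_left fun n =>
    Measure.absolutelyContinuous_sum_right n (hq n)⟩

open PaperMDP in
/-- For an absorbing MDP and stationary policies `π`, `σ`, if
`σ(·|x) ≪ π(·|x)` for all `x`, then `q_n^σ ≪ q_n^π` for all `n` and `q^σ ≪ q^π`. -/
theorem qn_absolutelyContinuous
    {S A : Type*} [MeasurableSpace S] [StandardBorelSpace S]
    [MeasurableSpace A] [StandardBorelSpace A]
    (M : MDP S A) (μ : MeasureTheory.Measure S) (star : S) (abar : A)
    {N : ℕ} (r : S × A → Fin N → ℝ)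
    (hAbs : Absorbing M μ r star abar)
    (π σ : StatPolicy M)
    (hac : ∀ x : S, σ.ker x ≪ π.ker x) :
    (∀ n : ℕ, qn μ σ.policy star n ≪ qn μ π.policy star n) ∧
      qMeas μ σ.policy star ≪ qMeas μ π.policy star :=
  qn_absolutelyContinuous_general M μ star π σ hac
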